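/- arXiv:1506.02850 — 7 statements merged into one kernel-verified Lean document; each statement's English description precedes it below -/
import Mathlib

section
/- Let G_H = (V_H, E_H) be a finite simple undirected graph with |V_H| = n ≥ 1, and let G be the graph obtained from G_H by adding a single new vertex v adjacent to every vertex of V_H, all edges of G having unit length. Then there exists a walk in G starting at v in which every vertex of V_H appears among the first n steps (i.e., for every h ∈ V_H there is an index j with 1 ≤ j ≤ n and x_j = h) if and only if G_H admits a Hamiltonian path. (This is the combinatorial core of the NP-hardness reductions for k-SRG-v and COV-SET: in the constructed patrolling instance, where every vertex of V_H is a target with penetration time n, the whole target set V_H is a covering set from v iff G_H has a Hamiltonian path.) -/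
/-!
A walk from the apex that reaches all `n` vertices of `G_H` within its first `n` steps has only
`n` slots for them, so steps `1, …, n` list each vertex exactly once and form a Hamiltonian path
of `G_H`. Conversely, prefixing a Hamiltonian
path with the apex, which is adjacent to everything, gives such a walk.
-/

/-- The graph obtained from `G_H` by adding a single new vertex (represented by `none`)
adjacent to every vertex of `G_H`. Two original vertices are adjacent iff they are
adjacent in `G_H`. -/
def coneGraph {V : Type*} (G_H : SimpleGraph V) : SimpleGraph (Option V) where
  Adj a b := a ≠ b ∧ ∀ u w : V, a = some u → b = some w → G_H.Adj u w
  symm := by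
    constructor
    rintro a b ⟨hne, h⟩
    exact ⟨hne.symm, fun u w hb ha => (h w u ha hb).symm⟩
  loopless := by
    constructor
    rintro a ⟨hne, _⟩
    exact hne rfl

section coneGraph

variable {V : Type*} (G : SimpleGraph V)

theorem coneGraph_adj_none_some (u : V) : (coneGraph G).Adj none (some u) :=
  ⟨nofun, nofun⟩

theorem coneGraph_adj_some_some {u w : V} : (coneGraph G).Adj (some u) (some w) ↔ G.Adj u w :=
  ⟨fun h => h.2 u w rfl rfl, fun h => ⟨by simpa using h.ne, by rintro _ _ ⟨⟩ ⟨⟩; exact h⟩⟩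

end coneGraph

theorem exists_equiv_eq_some_of_forall_some_mem_range {α β : Type*} [Fintype α] [Fintype β]
    (hcard : Fintype.card α = Fintype.card β) (g : α → Option β) (hg : ∀ b, ∃ a, g a = some b) :
    ∃ e : α ≃ β, ∀ a, g a = some (e a) := by
  choose s hs using hg
  have hs_inj : Function.Injective s := fun b b' h =>
    Option.some_injective _ (by rw [← hs, ← hs, h])
  let e := Equiv.ofBijective s ((Fintype.bijective_iff_injective_and_card s).2 ⟨hs_inj, hcard.symm⟩)
  refine ⟨e.symm, fun a => ?_⟩
  conv_lhs => rw [← e.apply_symm_apply a]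
  exact hs _

theorem exists_hamiltonian_of_covering_walk {V : Type*} [Fintype V] (G : SimpleGraph V) {n : ℕ}
    (hn : n = Fintype.card V) (hn1 : 0 < n) {x : ℕ → Option V}
    (hadj : ∀ i, i < n → (coneGraph G).Adj (x i) (x (i + 1)))
    (hcov : ∀ h : V, ∃ j, 1 ≤ j ∧ j ≤ n ∧ x j = some h) :
    ∃ p : ℕ → V, (∀ i j, i < n → j < n → p i = p j → i = j) ∧
      (∀ h : V, ∃ i, i < n ∧ p i = h) ∧ (∀ i, i + 1 < n → G.Adj (p i) (p (i + 1))) := by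
  obtain ⟨e, he⟩ := exists_equiv_eq_some_of_forall_some_mem_range
    (g := fun i : Fin n => x (i + 1)) (by simp [hn]) fun h => by
      obtain ⟨j, hj1, hjn, hj⟩ := hcov h
      exact ⟨⟨j - 1, by omega⟩, by simpa [Nat.sub_add_cancel hj1] using hj⟩
  let p : ℕ → V := fun i => e ⟨i % n, Nat.mod_lt i hn1⟩
  have hp : ∀ i (hi : i < n), p i = e ⟨i, hi⟩ := fun i hi => by simp [p, Nat.mod_eq_of_lt hi]
  have hxp : ∀ i, i < n → x (i + 1) = some (p i) := fun i hi => by rw [hp i hi]; exact he ⟨i, hi⟩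
  refine ⟨p, fun i j hi hj hij => ?_, fun h => ?_, fun i hi => ?_⟩
  · rw [hp i hi, hp j hj] at hij
    exact congrArg Fin.val (e.injective hij)
  · exact ⟨e.symm h, (e.symm h).isLt, by rw [hp _ (e.symm h).isLt]; simp⟩
  · have h := hadj (i + 1) hi
    rwa [hxp i (by omega), hxp (i + 1) hi, coneGraph_adj_some_some] at h

theorem exists_covering_walk_of_hamiltonian {V : Type*} (G : SimpleGraph V) {n : ℕ} {p : ℕ → V}
    (hsurj : ∀ h : V, ∃ i, i < n ∧ p i = h) (hadj : ∀ i, i + 1 < n → G.Adj (p i) (p (i + 1))) :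
    ∃ x : ℕ → Option V, x 0 = none ∧ (∀ i, i < n → (coneGraph G).Adj (x i) (x (i + 1))) ∧
      (∀ h : V, ∃ j, 1 ≤ j ∧ j ≤ n ∧ x j = some h) := by
  refine ⟨fun | 0 => none | j + 1 => some (p j), rfl, fun i hi => ?_, fun h => ?_⟩
  · cases i with
    | zero => exact coneGraph_adj_none_some G _
    | succ i => exact (coneGraph_adj_some_some G).2 (hadj i hi)
  · obtain ⟨i, hi, rfl⟩ := hsurj h
    exact ⟨i + 1, by omega, hi, rfl⟩

/-- There is a walk in the cone graph starting at the new vertex `none` in which every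
vertex of `V` appears among the first `n` steps iff `G_H` admits a Hamiltonian path. -/
theorem stmt0 {V : Type*} [Fintype V] (G_H : SimpleGraph V) (n : ℕ)
    (hn : n = Fintype.card V) (hn1 : 1 ≤ n) :
    (∃ x : ℕ → Option V, x 0 = none ∧
        (∀ i, i < n → (coneGraph G_H).Adj (x i) (x (i + 1))) ∧
        (∀ h : V, ∃ j, 1 ≤ j ∧ j ≤ n ∧ x j = some h)) ↔
      (∃ p : ℕ → V, (∀ i j, i < n → j < n → p i = p j → i = j) ∧
        (∀ h : V, ∃ i, i < n ∧ p i = h) ∧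
        (∀ i, i + 1 < n → G_H.Adj (p i) (p (i + 1)))) :=
  ⟨fun ⟨_, _, hadj, hcov⟩ => exists_hamiltonian_of_covering_walk G_H hn hn1 hadj hcov,
    fun ⟨_, _, hsurj, hadj⟩ => exists_covering_walk_of_hamiltonian G_H hsurj hadj⟩
end

section
/- Let n ≥ 3 and consider the complete graph on n vertices with a symmetric edge-weight function taking values in {1, 2}. If there exists a simple path visiting k distinct vertices (1 ≤ k ≤ n) whose total weight is c, then there exists a Hamiltonian cycle whose total weight is at most c + 2·(n − k + 1). (This is the path-completion bound used in the approximation-preserving reduction from TSP(1,2): a covering route visiting at least β|T(s)| targets yields a (roughly) (3−2β)-approximate tour.) -/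
/-- In a complete graph on `n ≥ 3` vertices with symmetric edge weights in `{1, 2}`,
a simple path visiting `k` distinct vertices of total weight `c` can be completed to a
Hamiltonian cycle of total weight at most `c + 2·(n − k + 1)`. -/
theorem stmt2 (n : ℕ) (hn : 3 ≤ n) (w : Fin n → Fin n → ℕ)
    (hsymm : ∀ i j, w i j = w j i)
    (hw : ∀ i j, i ≠ j → w i j = 1 ∨ w i j = 2)
    (k : ℕ) (hk1 : 1 ≤ k) (hkn : k ≤ n)
    (p : ℕ → Fin n) (hpinj : ∀ i j, i < k → j < k → p i = p j → i = j)
    (c : ℕ) (hc : c = ∑ i ∈ Finset.range (k - 1), w (p i) (p (i + 1))) :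
    ∃ q : ℕ → Fin n, (∀ i j, i < n → j < n → q i = q j → i = j) ∧
      (∀ v : Fin n, ∃ i, i < n ∧ q i = v) ∧
      (∑ i ∈ Finset.range (n - 1), w (q i) (q (i + 1))) + w (q (n - 1)) (q 0)
        ≤ c + 2 * (n - k + 1) := by
  classical
  set s : Finset (Fin n) := (Finset.range k).image p with hs
  have hscard : s.card = k := by
    rw [hs, Finset.card_image_of_injOn, Finset.card_range]
    intro i hi j hj hij
    exact hpinj i j (Finset.mem_range.mp hi) (Finset.mem_range.mp hj) hij
  have hcompl : sᶜ.card = n - k := by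
    rw [Finset.card_compl, hscard, Fintype.card_fin]
  let e := sᶜ.orderIsoOfFin hcompl
  set q : ℕ → Fin n := fun i =>
      if h : i < k then p i else
        if h2 : i - k < n - k then (e ⟨i - k, h2⟩ : Fin n) else p 0 with hq
  have hqlt : ∀ i, i < k → q i = p i := by
    intro i hi; simp [hq, hi]
  have hqge : ∀ i, k ≤ i → i < n → ∀ h2 : i - k < n - k, q i = e ⟨i - k, h2⟩ := by
    intro i hi hin h2
    simp [hq, Nat.not_lt.mpr hi, h2]
  have hmem : ∀ i, i < k → q i ∈ s := by
    intro i hi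
    rw [hqlt i hi]
    exact Finset.mem_image_of_mem p (Finset.mem_range.mpr hi)
  have hmemc : ∀ i, k ≤ i → i < n → q i ∈ sᶜ := by
    intro i hi hin
    have h2 : i - k < n - k := by omega
    rw [hqge i hi hin h2]
    exact (e ⟨i - k, h2⟩).2
  have hqinj : ∀ i j, i < n → j < n → q i = q j → i = j := by
    intro i j hi hj hij
    by_cases hik : i < k <;> by_cases hjk : j < k
    · exact hpinj i j hik hjk (by rw [← hqlt i hik, ← hqlt j hjk, hij])
    · exfalso
      have := hmemc j (Nat.not_lt.mp hjk) hj
      rw [← hij] at this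
      exact (Finset.mem_compl.mp this) (hmem i hik)
    · exfalso
      have := hmemc i (Nat.not_lt.mp hik) hi
      rw [hij] at this
      exact (Finset.mem_compl.mp this) (hmem j hjk)
    · have hik' := Nat.not_lt.mp hik
      have hjk' := Nat.not_lt.mp hjk
      have h2i : i - k < n - k := by omega
      have h2j : j - k < n - k := by omega
      rw [hqge i hik' hi h2i, hqge j hjk' hj h2j] at hij
      have : (⟨i - k, h2i⟩ : Fin (n - k)) = ⟨j - k, h2j⟩ := by
        apply e.injective
        exact Subtype.ext hij
      have := Fin.mk.injEq .. ▸ this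
      omega
  refine ⟨q, hqinj, ?_, ?_⟩
  · intro v
    by_cases hv : v ∈ s
    · obtain ⟨i, hi, hpi⟩ := Finset.mem_image.mp hv
      exact ⟨i, lt_of_lt_of_le (Finset.mem_range.mp hi) hkn,
        by rw [hqlt i (Finset.mem_range.mp hi)]; exact hpi⟩
    · have hv' : v ∈ sᶜ := Finset.mem_compl.mpr hv
      obtain ⟨m, hm⟩ := e.surjective ⟨v, hv'⟩
      refine ⟨k + m.1, by omega, ?_⟩
      have h2 : k + m.1 - k < n - k := by omega
      rw [hqge (k + m.1) (by omega) (by omega) h2]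
      have : (⟨k + m.1 - k, h2⟩ : Fin (n - k)) = m := by
        apply Fin.ext; simp
      rw [this, hm]
  · -- weight bound
    have hedge : ∀ i j, i < n → j < n → i ≠ j → w (q i) (q j) ≤ 2 := by
      intro i j hi hj hij
      have hne : q i ≠ q j := fun h => hij (hqinj i j hi hj h)
      rcases hw (q i) (q j) hne with h | h <;> omega
    have hsplit : ∑ i ∈ Finset.range (n - 1), w (q i) (q (i + 1)) =
        (∑ i ∈ Finset.Ico 0 (k - 1), w (q i) (q (i + 1))) +
        ∑ i ∈ Finset.Ico (k - 1) (n - 1), w (q i) (q (i + 1)) := by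
      rw [Finset.range_eq_Ico,
        ← Finset.sum_Ico_consecutive _ (Nat.zero_le (k - 1)) (show k - 1 ≤ n - 1 by omega)]
    have hfirst : ∑ i ∈ Finset.Ico 0 (k - 1), w (q i) (q (i + 1)) = c := by
      rw [hc, ← Finset.range_eq_Ico]
      apply Finset.sum_congr rfl
      intro i hi
      have hi' := Finset.mem_range.mp hi
      rw [hqlt i (by omega), hqlt (i + 1) (by omega)]
    have hsecond : ∑ i ∈ Finset.Ico (k - 1) (n - 1), w (q i) (q (i + 1)) ≤ 2 * (n - k) := by
      calc ∑ i ∈ Finset.Ico (k - 1) (n - 1), w (q i) (q (i + 1))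
          ≤ ∑ i ∈ Finset.Ico (k - 1) (n - 1), 2 := by
            apply Finset.sum_le_sum
            intro i hi
            have hi' := Finset.mem_Ico.mp hi
            exact hedge i (i + 1) (by omega) (by omega) (by omega)
        _ = 2 * (n - k) := by rw [Finset.sum_const, Nat.card_Ico, smul_eq_mul]; omega
    have hlast : w (q (n - 1)) (q 0) ≤ 2 :=
      hedge (n - 1) 0 (by omega) (by omega) (by omega)
    omega
end

section
/- Let a_1, …, a_n be positive integers with Σ_{i=1}^n a_i = 2B for a positive integer B, and set H = B. Consider the S2L-STAR graph: a center vertex v_0; for each i ∈ {1,…,n} an inner vertex u_i adjacent to v_0 by an edge of weight a_i and an outer vertex w_i adjacent to u_i by an edge of weight a_i (these are the only edges). Then there exists a walk starting at v_0 that visits every inner vertex u_i within time 6H − 3a_i and every outer vertex w_i within time 10H − 2a_i if and only if there exists a subset I' ⊆ {1,…,n} with Σ_{i∈I'} a_i = B. (This is the correctness of the reduction from PARTITION showing NP-hardness of k-SRG-v on special 2-level star graphs, i.e., on trees.) -/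
/-- The vertices of an S2L-STAR graph: a center `v₀`, an inner vertex `uᵢ` and an
outer vertex `wᵢ` for each branch `i`. -/
inductive S2LVertex (n : ℕ) where
  | center : S2LVertex n
  | inner : Fin n → S2LVertex n
  | outer : Fin n → S2LVertex n

/-- `S2LStep n a u v c` holds iff `{u, v}` is an edge of the S2L-STAR graph with branch
weights `a`, of weight `c`: the center is adjacent to each inner vertex `uᵢ` with weight
`a i`, and `uᵢ` is adjacent to the outer vertex `wᵢ` with weight `a i`. -/
inductive S2LStep (n : ℕ) (a : Fin n → ℕ) : S2LVertex n → S2LVertex n → ℕ → Prop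
  | ci (i : Fin n) : S2LStep n a .center (.inner i) (a i)
  | ic (i : Fin n) : S2LStep n a (.inner i) .center (a i)
  | io (i : Fin n) : S2LStep n a (.inner i) (.outer i) (a i)
  | oi (i : Fin n) : S2LStep n a (.outer i) (.inner i) (a i)

/-!
Write `T(k)` for the arrival time after `k` steps. It equals `∑ⱼ aⱼ · tⱼ(k)`, where `tⱼ(k)`
counts the traversals of the two edges of branch `j`; these are the switches of the indicators
"the walk is in branch `j`" and "the walk is at `wⱼ`", which start out false.

Let `uᵢ₀` be the inner vertex reached last, at step `k₀`, and `I` the set of `i` with `wᵢ`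
visited by then. Every branch has been entered, all but `i₀` have been left again, and the outer
edge of every branch in `I` has been crossed twice, so `4B + 2∑_I a ≤ T(k₀) + aᵢ₀ ≤ 6B - 2aᵢ₀`.
Let `w_{j₁}` be the outer vertex reached last, at step `k₁`, and `J = I ∪ {i₀}`. Every branch
outside `J` was entered before `k₀`, left by `k₀` and entered again before `k₁`, so
`12B ≤ T(k₁) + 2a_{j₁} + 2∑_J a ≤ 10B + 2∑_J a`. As `∑_J a ≤ ∑_I a + aᵢ₀ ≤ B`, `∑_J a = B`.

Conversely, if `∑_I a = B`, the walk that first makes the short trips `v₀ uᵢ v₀` for `i ∉ I`,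
then the full trips `v₀ uᵢ wᵢ uᵢ v₀` for `i ∈ I`, and finally the full trips for `i ∉ I` meets
every deadline.
-/

open Finset

def numSwitches (f : ℕ → Bool) (k : ℕ) : ℕ :=
  ∑ l ∈ range k, if f l = f (l + 1) then 0 else 1

section NumSwitches

variable {f : ℕ → Bool}

lemma numSwitches_succ (f : ℕ → Bool) (k : ℕ) :
    numSwitches f (k + 1) = numSwitches f k + if f k = f (k + 1) then 0 else 1 :=
  sum_range_succ _ _

lemma numSwitches_mono (f : ℕ → Bool) : Monotone (numSwitches f) := fun _ _ h =>
  sum_le_sum_of_subset (range_subset_range.mpr h)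

lemma numSwitches_lt_of_ne {k k' : ℕ} (h : k ≤ k') (hne : f k ≠ f k') :
    numSwitches f k < numSwitches f k' := by
  induction k', h using Nat.le_induction with
  | base => exact absurd rfl hne
  | succ k' hk ih =>
    rw [numSwitches_succ]
    by_cases hf : f k = f k'
    · have hswitch : f k' ≠ f (k' + 1) := hf ▸ hne
      have := numSwitches_mono f hk
      rw [if_neg hswitch]
      omega
    · have := ih hf
      omega

lemma numSwitches_add_two_le {l m k : ℕ} (hlm : l ≤ m) (hmk : m ≤ k) (hl : f l = false)
    (hm : f m = true) : numSwitches f l + 2 ≤ numSwitches f k + if f k then 1 else 0 := by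
  have := numSwitches_lt_of_ne (f := f) hlm (by simp [hl, hm])
  cases hk : f k
  · have := numSwitches_lt_of_ne (f := f) hmk (by simp [hm, hk])
    simp only [Bool.false_eq_true, if_false]
    omega
  · have := numSwitches_mono f hmk
    simp only [if_true]
    omega

lemma two_le_numSwitches {m k : ℕ} (hmk : m ≤ k) (h0 : f 0 = false) (hm : f m = true) :
    2 ≤ numSwitches f k + if f k then 1 else 0 := by
  simpa [numSwitches] using numSwitches_add_two_le (Nat.zero_le m) hmk h0 hm

end NumSwitches

namespace S2LVertex

variable {n : ℕ}

def inBranch (j : Fin n) : S2LVertex n → Bool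
  | center => false
  | inner i => j = i
  | outer i => j = i

def isOuter (j : Fin n) : S2LVertex n → Bool
  | outer i => j = i
  | _ => false

variable {i j : Fin n}

@[simp] lemma inBranch_center : center.inBranch j = false := rfl
@[simp] lemma inBranch_inner : (inner i).inBranch j = decide (j = i) := rfl
@[simp] lemma inBranch_outer : (outer i).inBranch j = decide (j = i) := rfl
@[simp] lemma isOuter_center : center.isOuter j = false := rfl
@[simp] lemma isOuter_inner : (inner i).isOuter j = false := rfl
@[simp] lemma isOuter_outer : (outer i).isOuter j = decide (j = i) := rfl

end S2LVertex

section LowerBounds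

variable {n : ℕ} {a : Fin n → ℕ} {x : ℕ → S2LVertex n} {j : Fin n}

lemma S2LStep.weight_eq_sum {u v : S2LVertex n} {d : ℕ} (h : S2LStep n a u v d) :
    d = ∑ j, a j * ((if u.inBranch j = v.inBranch j then 0 else 1) +
      if u.isOuter j = v.isOuter j then 0 else 1) := by
  cases h <;> simp

def traversals (x : ℕ → S2LVertex n) (j : Fin n) (k : ℕ) : ℕ :=
  numSwitches (fun l => (x l).inBranch j) k + numSwitches (fun l => (x l).isOuter j) k

lemma sum_range_eq_sum_mul_traversals {c : ℕ → ℕ} {m k : ℕ}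
    (hstep : ∀ l < m, S2LStep n a (x l) (x (l + 1)) (c l)) (hk : k ≤ m) :
    ∑ l ∈ range k, c l = ∑ j, a j * traversals x j k := by
  simp_rw [traversals, numSwitches, ← sum_add_distrib, mul_sum]
  rw [sum_comm]
  exact sum_congr rfl fun l hl => (hstep l (by simp at hl; omega)).weight_eq_sum

lemma two_le_numSwitches_inBranch (hx0 : x 0 = .center) {l k : ℕ} (hlk : l ≤ k)
    (hl : (x l).inBranch j) :
    2 ≤ numSwitches (fun l => (x l).inBranch j) k + if (x k).inBranch j then 1 else 0 :=
  two_le_numSwitches hlk (by simp [hx0]) hl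

lemma two_le_numSwitches_isOuter (hx0 : x 0 = .center) {l k : ℕ} (hlk : l ≤ k)
    (hl : x l = .outer j) :
    2 ≤ numSwitches (fun l => (x l).isOuter j) k + if (x k).isOuter j then 1 else 0 :=
  two_le_numSwitches hlk (by simp [hx0]) (by simp [hl])

lemma le_traversals_of_eq_inner (hx0 : x 0 = .center) {k : ℕ} {i₀ : Fin n}
    (hk : x k = .inner i₀) (hin : ∃ l ≤ k, x l = .inner j) (p : Prop) [Decidable p]
    (hp : p → ∃ l ≤ k, x l = .outer j) :
    2 + 2 * (if p then 1 else 0) ≤ traversals x j k + if j = i₀ then 1 else 0 := by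
  obtain ⟨l, hlk, hl⟩ := hin
  have hN : 2 ≤ numSwitches (fun l => (x l).inBranch j) k + if j = i₀ then 1 else 0 := by
    simpa [hk] using two_le_numSwitches_inBranch hx0 hlk (by simp [hl])
  unfold traversals
  by_cases hp' : p
  · obtain ⟨l', hl'k, hl'⟩ := hp hp'
    have hM : 2 ≤ numSwitches (fun l => (x l).isOuter j) k := by
      simpa [hk] using two_le_numSwitches_isOuter hx0 hl'k hl'
    rw [if_pos hp']
    omega
  · rw [if_neg hp']
    omega

lemma le_traversals_of_eq_outer (hx0 : x 0 = .center) {k₀ k₁ : ℕ} {i₀ j₁ : Fin n}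
    (hk₀ : x k₀ = .inner i₀) (hk₁ : x k₁ = .outer j₁) (hin : ∃ l ≤ k₀, x l = .inner j)
    (hout : ∃ l ≤ k₁, x l = .outer j) (p : Prop) [Decidable p]
    (hp : ¬p → j ≠ i₀ ∧ ∃ l, k₀ ≤ l ∧ l ≤ k₁ ∧ x l = .outer j) :
    6 ≤ traversals x j k₁ + 2 * (if j = j₁ then 1 else 0) + 2 * (if p then 1 else 0) := by
  obtain ⟨l, hlk, hl⟩ := hout
  have hN : 2 ≤ numSwitches (fun l => (x l).inBranch j) k₁ + if j = j₁ then 1 else 0 := by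
    simpa [hk₁] using two_le_numSwitches_inBranch hx0 hlk (by simp [hl])
  have hM : 2 ≤ numSwitches (fun l => (x l).isOuter j) k₁ + if j = j₁ then 1 else 0 := by
    simpa [hk₁] using two_le_numSwitches_isOuter hx0 hlk hl
  unfold traversals
  by_cases hp' : p
  · rw [if_pos hp']
    omega
  · obtain ⟨hji₀, l', hl', hl'k, hxl'⟩ := hp hp'
    obtain ⟨l₀, hl₀k, hxl₀⟩ := hin
    -- branch `j` is entered before `k₀`, left by `k₀`, and entered again before `k₁`
    have h₀ : 2 ≤ numSwitches (fun l => (x l).inBranch j) k₀ := by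
      simpa [hk₀, hji₀] using two_le_numSwitches_inBranch (j := j) hx0 hl₀k (by simp [hxl₀])
    have h₁ : numSwitches (fun l => (x l).inBranch j) k₀ + 2 ≤
        numSwitches (fun l => (x l).inBranch j) k₁ + if j = j₁ then 1 else 0 := by
      simpa [hk₁] using numSwitches_add_two_le (f := fun l => (x l).inBranch j) hl' hl'k
        (by simp [hk₀, hji₀]) (by simp [hxl'])
    rw [if_neg hp']
    omega

theorem exists_sum_eq_of_walk {B : ℕ} (hsum : ∑ i, a i = 2 * B) {m : ℕ} {c : ℕ → ℕ}
    (hx0 : x 0 = .center) (hstep : ∀ j < m, S2LStep n a (x j) (x (j + 1)) (c j))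
    (hinner : ∀ i, ∃ j ≤ m, x j = .inner i ∧ ∑ l ∈ range j, c l + 3 * a i ≤ 6 * B)
    (houter : ∀ i, ∃ j ≤ m, x j = .outer i ∧ ∑ l ∈ range j, c l + 2 * a i ≤ 10 * B) :
    ∃ I : Finset (Fin n), ∑ i ∈ I, a i = B := by
  classical
  rcases isEmpty_or_nonempty (Fin n) with hn | hn
  · exact ⟨∅, by simp at hsum ⊢; omega⟩
  choose ti hti_le hti hti_time using hinner
  choose si hsi_le hsi hsi_time using houter
  obtain ⟨i₀, -, hi₀⟩ := univ.exists_max_image ti univ_nonempty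
  obtain ⟨j₁, -, hj₁⟩ := univ.exists_max_image si univ_nonempty
  set I := univ.filter fun j => ∃ l ≤ ti i₀, x l = .outer j
  have hmem : ∀ j, j ∈ I ↔ ∃ l ≤ ti i₀, x l = .outer j := by simp [I]
  have h₀ : ∑ j, a j * (2 + 2 * if j ∈ I then 1 else 0) ≤
      ∑ j, a j * (traversals x j (ti i₀) + if j = i₀ then 1 else 0) :=
    sum_le_sum fun j _ => Nat.mul_le_mul_left _ <|
      le_traversals_of_eq_inner hx0 (hti i₀) ⟨ti j, hi₀ j (by simp), hti j⟩ _ (hmem j).1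
  have h₁ : ∑ j, a j * 6 ≤ ∑ j, a j * (traversals x j (si j₁) +
      2 * (if j = j₁ then 1 else 0) + 2 * if j ∈ insert i₀ I then 1 else 0) := by
    refine sum_le_sum fun j _ => Nat.mul_le_mul_left _ <|
      le_traversals_of_eq_outer hx0 (hti i₀) (hsi j₁) ⟨ti j, hi₀ j (by simp), hti j⟩
        ⟨si j, hj₁ j (by simp), hsi j⟩ _ fun hj => ?_
    simp only [mem_insert, hmem, not_or, not_exists, not_and] at hj
    exact ⟨hj.1, si j, by by_contra h; exact hj.2 _ (by omega) (hsi j), hj₁ j (by simp), hsi j⟩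
  simp only [mul_add, sum_add_distrib, mul_ite, mul_one, mul_zero, sum_ite_mem, univ_inter,
    sum_ite_eq', mem_univ, if_true, ← sum_mul, hsum,
    ← sum_range_eq_sum_mul_traversals hstep (hti_le i₀),
    ← sum_range_eq_sum_mul_traversals hstep (hsi_le j₁)] at h₀ h₁
  have hJ : ∑ i ∈ insert i₀ I, a i ≤ a i₀ + ∑ i ∈ I, a i := by
    by_cases hi : i₀ ∈ I
    · rw [insert_eq_of_mem hi]
      omega
    · rw [sum_insert hi]
  have := hti_time i₀
  have := hsi_time j₁
  exact ⟨insert i₀ I, by omega⟩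

end LowerBounds

section Construction

variable {n : ℕ} (a : Fin n → ℕ)

/-- A walk from `u` to `v`, as the list of its steps `(vertex entered, weight of the edge)`. -/
inductive IsS2LWalk : S2LVertex n → List (S2LVertex n × ℕ) → S2LVertex n → Prop
  | nil (u : S2LVertex n) : IsS2LWalk u [] u
  | cons {u v w : S2LVertex n} {d : ℕ} {W : List (S2LVertex n × ℕ)} :
      S2LStep n a u v d → IsS2LWalk v W w → IsS2LWalk u ((v, d) :: W) w

def vertexSeq (u : S2LVertex n) (W : List (S2LVertex n × ℕ)) (j : ℕ) : S2LVertex n :=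
  (u :: W.map Prod.fst).getD j .center

def weightSeq (W : List (S2LVertex n × ℕ)) (j : ℕ) : ℕ :=
  (W.map Prod.snd).getD j 0

def totalWeight (W : List (S2LVertex n × ℕ)) : ℕ :=
  (W.map Prod.snd).sum

def shortTrip (i : Fin n) : List (S2LVertex n × ℕ) :=
  [(.inner i, a i), (.center, a i)]

def longTrip (i : Fin n) : List (S2LVertex n × ℕ) :=
  [(.inner i, a i), (.outer i, a i), (.inner i, a i), (.center, a i)]

noncomputable def partitionWalk (I : Finset (Fin n)) : List (S2LVertex n × ℕ) :=
  Iᶜ.toList.flatMap (shortTrip a) ++ I.toList.flatMap (longTrip a) ++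
    Iᶜ.toList.flatMap (longTrip a)

lemma isS2LWalk_shortTrip (i : Fin n) : IsS2LWalk a .center (shortTrip a i) .center :=
  .cons (.ci i) (.cons (.ic i) (.nil _))

lemma isS2LWalk_longTrip (i : Fin n) : IsS2LWalk a .center (longTrip a i) .center :=
  .cons (.ci i) (.cons (.io i) (.cons (.oi i) (.cons (.ic i) (.nil _))))

lemma totalWeight_shortTrip (i : Fin n) : totalWeight (shortTrip a i) = 2 * a i := by
  simp [shortTrip, totalWeight, two_mul]

lemma totalWeight_longTrip (i : Fin n) : totalWeight (longTrip a i) = 4 * a i := by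
  simp only [longTrip, totalWeight, List.map_cons, List.map_nil, List.sum_cons, List.sum_nil]
  ring

variable {a}

lemma IsS2LWalk.append {u v w : S2LVertex n} {P Q : List (S2LVertex n × ℕ)}
    (hP : IsS2LWalk a u P v) (hQ : IsS2LWalk a v Q w) : IsS2LWalk a u (P ++ Q) w := by
  induction hP with
  | nil => exact hQ
  | cons h _ ih => exact .cons h (ih hQ)

lemma IsS2LWalk.flatMap {ι : Type*} {u : S2LVertex n} {T : ι → List (S2LVertex n × ℕ)}
    (hT : ∀ i, IsS2LWalk a u (T i) u) (L : List ι) : IsS2LWalk a u (L.flatMap T) u := by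
  induction L with
  | nil => exact .nil u
  | cons i L ih => exact (hT i).append ih

lemma IsS2LWalk.step {u v : S2LVertex n} {W : List (S2LVertex n × ℕ)}
    (hW : IsS2LWalk a u W v) :
    ∀ j < W.length, S2LStep n a (vertexSeq u W j) (vertexSeq u W (j + 1)) (weightSeq W j) := by
  induction hW with
  | nil => simp
  | cons h _ ih =>
    rintro (_ | j) hj
    · simpa [vertexSeq, weightSeq] using h
    · simpa [vertexSeq, weightSeq] using ih j (by simpa using hj)

@[simp] lemma totalWeight_nil : totalWeight ([] : List (S2LVertex n × ℕ)) = 0 := rfl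

@[simp] lemma totalWeight_cons (v : S2LVertex n) (d : ℕ) (W : List (S2LVertex n × ℕ)) :
    totalWeight ((v, d) :: W) = d + totalWeight W := rfl

lemma totalWeight_append (P Q : List (S2LVertex n × ℕ)) :
    totalWeight (P ++ Q) = totalWeight P + totalWeight Q := by
  simp [totalWeight]

lemma totalWeight_flatMap {ι : Type*} (T : ι → List (S2LVertex n × ℕ)) (L : List ι) :
    totalWeight (L.flatMap T) = (L.map fun i => totalWeight (T i)).sum := by
  induction L with
  | nil => rfl
  | cons i L ih => rw [List.flatMap_cons, totalWeight_append, ih, List.map_cons, List.sum_cons]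

lemma totalWeight_flatMap_toList {ι : Type*} (T : ι → List (S2LVertex n × ℕ)) (s : Finset ι) :
    totalWeight (s.toList.flatMap T) = ∑ i ∈ s, totalWeight (T i) := by
  rw [totalWeight_flatMap, sum_map_toList]

lemma sum_range_weightSeq {W : List (S2LVertex n × ℕ)} {j : ℕ} (hj : j ≤ W.length) :
    ∑ l ∈ range j, weightSeq W l = totalWeight (W.take j) := by
  induction j with
  | zero => simp
  | succ j ih =>
    have hj' : j < (W.map Prod.snd).length := by simpa using hj
    rw [sum_range_succ, ih (by omega), totalWeight, totalWeight, List.map_take, List.map_take,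
      List.sum_take_succ _ j hj', weightSeq, List.getD_eq_getElem _ 0 hj']

lemma exists_visit {u v : S2LVertex n} {d : ℕ} {W P Q : List (S2LVertex n × ℕ)}
    (hW : W = P ++ (v, d) :: Q) :
    ∃ j ≤ W.length, vertexSeq u W j = v ∧ ∑ l ∈ range j, weightSeq W l = totalWeight P + d := by
  subst hW
  refine ⟨P.length + 1, by simp, by simp [vertexSeq], ?_⟩
  rw [sum_range_weightSeq (by simp)]
  simp [totalWeight, List.take_append, List.take_of_length_le]

lemma exists_visit_of_mem_flatMap {ι : Type*} {u v : S2LVertex n} {d : ℕ}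
    {T : ι → List (S2LVertex n × ℕ)} {L : List ι} {i : ι} {W A C P Q : List (S2LVertex n × ℕ)}
    (hW : W = A ++ L.flatMap T ++ C) (hi : i ∈ L) (hT : T i = P ++ (v, d) :: Q) :
    ∃ j ≤ W.length, vertexSeq u W j = v ∧ ∑ l ∈ range j, weightSeq W l + totalWeight (T i) ≤
      totalWeight A + totalWeight (L.flatMap T) + totalWeight P + d := by
  obtain ⟨L₁, L₂, rfl⟩ := List.append_of_mem hi
  obtain ⟨j, hj, hvj, htime⟩ := exists_visit (u := u) (W := W) (v := v) (d := d)
    (P := A ++ L₁.flatMap T ++ P) (Q := Q ++ L₂.flatMap T ++ C) (by simp [hW, hT])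
  refine ⟨j, hj, hvj, ?_⟩
  simp only [htime, List.flatMap_append, List.flatMap_cons, totalWeight_append]
  omega

theorem exists_walk_of_sum_eq {B : ℕ} (hsum : ∑ i, a i = 2 * B) {I : Finset (Fin n)}
    (hI : ∑ i ∈ I, a i = B) :
    ∃ (m : ℕ) (x : ℕ → S2LVertex n) (c : ℕ → ℕ), x 0 = .center ∧
      (∀ j < m, S2LStep n a (x j) (x (j + 1)) (c j)) ∧
      (∀ i, ∃ j ≤ m, x j = .inner i ∧ ∑ l ∈ range j, c l + 3 * a i ≤ 6 * B) ∧
      (∀ i, ∃ j ≤ m, x j = .outer i ∧ ∑ l ∈ range j, c l + 2 * a i ≤ 10 * B) := by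
  classical
  have hIc : ∑ i ∈ Iᶜ, a i = B := by
    have := sum_add_sum_compl I a
    omega
  have hwalk : IsS2LWalk a .center (partitionWalk a I) .center :=
    ((IsS2LWalk.flatMap (isS2LWalk_shortTrip a) _).append
      (IsS2LWalk.flatMap (isS2LWalk_longTrip a) _)).append
      (IsS2LWalk.flatMap (isS2LWalk_longTrip a) _)
  have hI' : ∀ {i}, i ∈ I → i ∈ I.toList := mem_toList.2
  have hIc' : ∀ {i}, i ∉ I → i ∈ Iᶜ.toList := fun hi => mem_toList.2 (mem_compl.2 hi)
  refine ⟨_, vertexSeq .center (partitionWalk a I), weightSeq (partitionWalk a I), rfl,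
    hwalk.step, fun i => ?_, fun i => ?_⟩
  · by_cases hi : i ∈ I
    · obtain ⟨j, hj, hxj, htime⟩ := exists_visit_of_mem_flatMap (u := .center)
        (W := partitionWalk a I) (T := longTrip a) (P := []) rfl (hI' hi) rfl
      simp only [totalWeight_flatMap_toList, totalWeight_longTrip, totalWeight_shortTrip,
        ← mul_sum, hI, hIc, totalWeight_nil] at htime
      exact ⟨j, hj, hxj, by omega⟩
    · obtain ⟨j, hj, hxj, htime⟩ := exists_visit_of_mem_flatMap (u := .center)
        (W := partitionWalk a I) (T := shortTrip a) (A := []) (P := [])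
        (by rw [partitionWalk, List.nil_append, List.append_assoc]) (hIc' hi) rfl
      simp only [totalWeight_flatMap_toList, totalWeight_shortTrip, ← mul_sum, hIc,
        totalWeight_nil] at htime
      exact ⟨j, hj, hxj, by omega⟩
  · by_cases hi : i ∈ I
    · obtain ⟨j, hj, hxj, htime⟩ := exists_visit_of_mem_flatMap (u := .center)
        (W := partitionWalk a I) (T := longTrip a) (P := [(.inner i, a i)]) rfl (hI' hi) rfl
      simp only [totalWeight_flatMap_toList, totalWeight_longTrip, totalWeight_shortTrip,
        ← mul_sum, hI, hIc, totalWeight_cons, totalWeight_nil] at htime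
      exact ⟨j, hj, hxj, by omega⟩
    · obtain ⟨j, hj, hxj, htime⟩ := exists_visit_of_mem_flatMap (u := .center)
        (W := partitionWalk a I) (T := longTrip a) (C := []) (P := [(.inner i, a i)])
        (by rw [partitionWalk, List.append_nil]) (hIc' hi) rfl
      simp only [totalWeight_flatMap_toList, totalWeight_longTrip, totalWeight_shortTrip,
        totalWeight_append, ← mul_sum, hI, hIc, totalWeight_cons, totalWeight_nil] at htime
      exact ⟨j, hj, hxj, by omega⟩

end Construction

theorem stmt5_general (n B : ℕ) (a : Fin n → ℕ)
    (hsum : ∑ i, a i = 2 * B) :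
    (∃ (m : ℕ) (x : ℕ → S2LVertex n) (c : ℕ → ℕ),
        x 0 = S2LVertex.center ∧
        (∀ j < m, S2LStep n a (x j) (x (j + 1)) (c j)) ∧
        (∀ i : Fin n, ∃ j ≤ m, x j = S2LVertex.inner i ∧
          (∑ l ∈ Finset.range j, c l) + 3 * a i ≤ 6 * B) ∧
        (∀ i : Fin n, ∃ j ≤ m, x j = S2LVertex.outer i ∧
          (∑ l ∈ Finset.range j, c l) + 2 * a i ≤ 10 * B)) ↔
      ∃ I : Finset (Fin n), ∑ i ∈ I, a i = B :=
  ⟨fun ⟨_, _, _, hx0, hstep, hinner, houter⟩ => exists_sum_eq_of_walk hsum hx0 hstep hinner houter,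
    fun ⟨_, hI⟩ => exists_walk_of_sum_eq hsum hI⟩

/-- Correctness of the reduction from PARTITION: with `H = B`, there is a walk from the
center of the S2L-STAR graph visiting every inner vertex `uᵢ` within time `6H − 3aᵢ` and
every outer vertex `wᵢ` within time `10H − 2aᵢ` iff some subset of the `aᵢ` sums to `B`. -/
theorem stmt5 (n B : ℕ) (hB : 0 < B) (a : Fin n → ℕ) (ha : ∀ i, 0 < a i)
    (hsum : ∑ i, a i = 2 * B) :
    (∃ (m : ℕ) (x : ℕ → S2LVertex n) (c : ℕ → ℕ),
        x 0 = S2LVertex.center ∧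
        (∀ j < m, S2LStep n a (x j) (x (j + 1)) (c j)) ∧
        (∀ i : Fin n, ∃ j ≤ m, x j = S2LVertex.inner i ∧
          (∑ l ∈ Finset.range j, c l) + 3 * a i ≤ 6 * B) ∧
        (∀ i : Fin n, ∃ j ≤ m, x j = S2LVertex.outer i ∧
          (∑ l ∈ Finset.range j, c l) + 2 * a i ≤ 10 * B)) ↔
      ∃ I : Finset (Fin n), ∑ i ∈ I, a i = B :=
  stmt5_general n B a hsum
end

section
/- Consider a star graph with center v_0 and leaves t_1, …, t_n, where the edge {v_0, t_i} has positive integer weight γ_i, and let d_1, …, d_n be deadlines. Then there exists a walk starting at v_0 that visits each leaf t_i within time d_i if and only if there exists a permutation σ of {1,…,n} such that for every k ∈ {1,…,n}: γ_{σ(k)} + 2·Σ_{j<k} γ_{σ(j)} ≤ d_{σ(k)}. (This is the correspondence between covering routes on SIMPLE-STAR instances and feasible schedules with processing times 2γ_i and deadlines d_i + γ_i.) -/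
/-!
A walk that has visited the leaves in a set `V` and now stands at depth `h` (`0` at the
center, `γᵢ` at leaf `tᵢ`) has spent at least `2 Σ_{V} γ - h`: every visited leaf other than
the current one was entered and left. Hence, ordering the leaves by the time of a
deadline-respecting visit gives a feasible schedule. Conversely, a schedule `σ` is realised by
the walk that goes out to `t_{σ(0)}`, back, out to `t_{σ(1)}`, back, and so on.
-/

/-- `StarStep n γ u v c` holds iff `{u, v}` is an edge of weight `c` of the star graph
with center `none` and leaves `some i` at distance `γ i` from the center. -/
inductive StarStep (n : ℕ) (γ : Fin n → ℕ) : Option (Fin n) → Option (Fin n) → ℕ → Prop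
  | out (i : Fin n) : StarStep n γ none (some i) (γ i)
  | back (i : Fin n) : StarStep n γ (some i) none (γ i)

open Finset

section Visited

variable {α : Type*} [DecidableEq α]

def visited (x : ℕ → Option α) (j : ℕ) : Finset α :=
  (range (j + 1)).biUnion fun l => (x l).toFinset

theorem mem_visited {x : ℕ → Option α} {j : ℕ} {a : α} :
    a ∈ visited x j ↔ ∃ l ≤ j, x l = some a := by
  simp [visited]

theorem visited_zero (x : ℕ → Option α) : visited x 0 = (x 0).toFinset := by
  simp [visited]

theorem visited_succ (x : ℕ → Option α) (j : ℕ) :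
    visited x (j + 1) = visited x j ∪ (x (j + 1)).toFinset := by
  rw [visited, range_add_one, biUnion_insert, union_comm, visited]

end Visited

theorem Finset.sum_union_le {α M : Type*} [DecidableEq α] [AddCommMonoid M] [PartialOrder M]
    [CanonicallyOrderedAdd M] (s t : Finset α) (f : α → M) :
    ∑ a ∈ s ∪ t, f a ≤ ∑ a ∈ s, f a + ∑ a ∈ t, f a := by
  rw [← sum_union_inter]
  exact le_self_add

theorem sum_range_two_mul_add_one_div_two {R : Type*} [CommSemiring R] (g : ℕ → R) (k : ℕ) :
    ∑ l ∈ range (2 * k + 1), g (l / 2) = g k + 2 * ∑ p ∈ range k, g p := by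
  induction k with
  | zero => simp
  | succ k ih =>
    rw [show 2 * (k + 1) + 1 = 2 * k + 1 + 1 + 1 by ring, sum_range_succ, sum_range_succ, ih,
      sum_range_succ, show (2 * k + 1) / 2 = k by omega, show (2 * k + 1 + 1) / 2 = k + 1 by omega]
    ring

theorem Fin.sum_Iio_val {M : Type*} [AddCommMonoid M] {n : ℕ} (k : Fin n) (g : ℕ → M) :
    ∑ j ∈ Iio k, g j = ∑ p ∈ range k, g p := by
  rw [← Nat.Iio_eq_range, ← Fin.map_valEmbedding_Iio, sum_map]
  rfl

variable {n : ℕ} {γ : Fin n → ℕ}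

def centerDist (γ : Fin n → ℕ) (o : Option (Fin n)) : ℕ :=
  ∑ i ∈ o.toFinset, γ i

@[simp] theorem centerDist_none : centerDist γ none = 0 := by
  simp [centerDist]

@[simp] theorem centerDist_some (i : Fin n) : centerDist γ (some i) = γ i := by
  simp [centerDist]

theorem StarStep.centerDist_add {u v : Option (Fin n)} {c : ℕ} (h : StarStep n γ u v c) :
    centerDist γ u + centerDist γ v = c := by
  cases h <;> simp

theorem two_mul_sum_visited_le {m : ℕ} {x : ℕ → Option (Fin n)} {c : ℕ → ℕ}
    (hx0 : x 0 = none) (hstep : ∀ j < m, StarStep n γ (x j) (x (j + 1)) (c j)) :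
    ∀ j ≤ m, 2 * ∑ i ∈ visited x j, γ i ≤ ∑ l ∈ range j, c l + centerDist γ (x j) := by
  intro j
  induction j with
  | zero => simp [visited_zero, hx0]
  | succ j ih =>
    intro hj
    have hsum := sum_union_le (visited x j) (x (j + 1)).toFinset γ
    have hc := (hstep j hj).centerDist_add
    have ih := ih (by omega)
    rw [visited_succ, sum_range_succ]
    unfold centerDist at *
    linarith

theorem exists_perm_of_walk {m : ℕ} {x : ℕ → Option (Fin n)} {c : ℕ → ℕ} {d : Fin n → ℕ}
    (hx0 : x 0 = none) (hstep : ∀ j < m, StarStep n γ (x j) (x (j + 1)) (c j))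
    (hvis : ∀ i, ∃ j ≤ m, x j = some i ∧ ∑ l ∈ range j, c l ≤ d i) :
    ∃ σ : Equiv.Perm (Fin n), ∀ k, γ (σ k) + 2 * ∑ j ∈ Iio k, γ (σ j) ≤ d (σ k) := by
  choose t htm hxt hd using hvis
  refine ⟨Tuple.sort t, fun k => ?_⟩
  set σ := Tuple.sort t
  -- ordering by visit time, every leaf scheduled up to `k` has been visited when `σ k` is
  have hsub : (Iic k).image σ ⊆ visited x (t (σ k)) := by
    simp only [subset_iff, mem_image, mem_Iic, mem_visited]
    rintro _ ⟨p, hp, rfl⟩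
    exact ⟨t (σ p), Tuple.monotone_sort t hp, hxt _⟩
  have hIic : ∑ j ∈ (Iic k).image σ, γ j = γ (σ k) + ∑ j ∈ Iio k, γ (σ j) := by
    rw [sum_image σ.injective.injOn, ← Iio_insert, sum_insert notMem_Iio_self]
  have hbound := two_mul_sum_visited_le hx0 hstep _ (htm (σ k))
  rw [hxt, centerDist_some] at hbound
  have := sum_le_sum_of_subset (f := γ) hsub
  have := hd (σ k)
  omega

def outAndBack (y : ℕ → Option (Fin n)) (j : ℕ) : Option (Fin n) :=
  if j % 2 = 1 then y (j / 2) else none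

theorem starStep_outAndBack {y : ℕ → Option (Fin n)} {j : ℕ} {i : Fin n}
    (hy : y (j / 2) = some i) :
    StarStep n γ (outAndBack y j) (outAndBack y (j + 1)) (γ i) := by
  rcases Nat.mod_two_eq_zero_or_one j with hj | hj
  · rw [outAndBack, outAndBack, if_neg (by omega), if_pos (by omega),
      show (j + 1) / 2 = j / 2 by omega, hy]
    exact .out i
  · rw [outAndBack, outAndBack, if_pos hj, if_neg (by omega), hy]
    exact .back i

theorem walk_of_perm {d : Fin n → ℕ} (σ : Equiv.Perm (Fin n))
    (hσ : ∀ k, γ (σ k) + 2 * ∑ j ∈ Iio k, γ (σ j) ≤ d (σ k)) :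
    ∃ (m : ℕ) (x : ℕ → Option (Fin n)) (c : ℕ → ℕ),
      x 0 = none ∧
      (∀ j < m, StarStep n γ (x j) (x (j + 1)) (c j)) ∧
      (∀ i, ∃ j ≤ m, x j = some i ∧ ∑ l ∈ range j, c l ≤ d i) := by
  let y : ℕ → Option (Fin n) := fun p => if h : p < n then some (σ ⟨p, h⟩) else none
  have hy (k : Fin n) : y k = some (σ k) := by simp [y]
  refine ⟨2 * n, outAndBack y, fun j => centerDist γ (y (j / 2)), rfl, fun j hj => ?_,
    fun i => ⟨2 * (σ.symm i) + 1, by omega, ?_, ?_⟩⟩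
  · have hyj : y (j / 2) = some (σ ⟨j / 2, by omega⟩) := hy ⟨j / 2, _⟩
    beta_reduce
    rw [hyj, centerDist_some]
    exact starStep_outAndBack hyj
  · simp [outAndBack, Nat.mul_add_div, hy]
  · have hcost : ∑ p ∈ range (σ.symm i), centerDist γ (y p) = ∑ j ∈ Iio (σ.symm i), γ (σ j) := by
      rw [← Fin.sum_Iio_val]
      simp only [hy, centerDist_some]
    beta_reduce
    rw [sum_range_two_mul_add_one_div_two (fun p => centerDist γ (y p)), hcost, hy, centerDist_some]
    simpa using hσ (σ.symm i)

theorem stmt7_general (n : ℕ) (γ : Fin n → ℕ) (d : Fin n → ℕ) :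
    (∃ (m : ℕ) (x : ℕ → Option (Fin n)) (c : ℕ → ℕ),
        x 0 = none ∧
        (∀ j < m, StarStep n γ (x j) (x (j + 1)) (c j)) ∧
        (∀ i : Fin n, ∃ j ≤ m, x j = some i ∧ (∑ l ∈ Finset.range j, c l) ≤ d i)) ↔
      ∃ σ : Equiv.Perm (Fin n), ∀ k : Fin n,
        γ (σ k) + 2 * ∑ j ∈ Finset.Iio k, γ (σ j) ≤ d (σ k) :=
  ⟨fun ⟨_, _, _, hx0, hstep, hvis⟩ => exists_perm_of_walk hx0 hstep hvis,
    fun ⟨σ, hσ⟩ => walk_of_perm σ hσ⟩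

/-- On a SIMPLE-STAR instance, a walk from the center visiting every leaf `tᵢ` within its
deadline `dᵢ` exists iff there is a permutation `σ` of the leaves such that
`γ_{σ(k)} + 2·Σ_{j<k} γ_{σ(j)} ≤ d_{σ(k)}` for every `k`. -/
theorem stmt7 (n : ℕ) (γ : Fin n → ℕ) (hγ : ∀ i, 0 < γ i) (d : Fin n → ℕ) :
    (∃ (m : ℕ) (x : ℕ → Option (Fin n)) (c : ℕ → ℕ),
        x 0 = none ∧
        (∀ j < m, StarStep n γ (x j) (x (j + 1)) (c j)) ∧
        (∀ i : Fin n, ∃ j ≤ m, x j = some i ∧ (∑ l ∈ Finset.range j, c l) ≤ d i)) ↔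
      ∃ σ : Equiv.Perm (Fin n), ∀ k : Fin n,
        γ (σ k) + 2 * ∑ j ∈ Finset.Iio k, γ (σ j) ≤ d (σ k) :=
  stmt7_general n γ d
end

section
/- Consider a linear (path) graph whose vertices are 1, 2, …, N in order, with unit edge lengths, a set of targets T ⊆ {1,…,N} with deadlines d : T → ℕ, and a starting vertex v ∈ {1,…,N}. If a nonempty set Q ⊆ T is a proper covering set from v, then Q = { t ∈ T : min(Q ∪ {v}) ≤ t ≤ max(Q ∪ {v}) }, i.e., Q consists exactly of all targets lying between its extreme elements (together with v). Consequently, the number of proper covering sets from v is at most (|T| + 1)². (This characterization underlies the polynomial-time algorithm for SRG-v on linear graphs.) -/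
/-- `Q` is a proper covering set from `v` on the linear graph with vertices `1, …, N`
(unit edge lengths), targets `T` and deadlines `d`: there is a walk starting at `v`
that visits every target of `Q` within its deadline and passes through no target of
`T \ Q`. -/
def LinePCS (N : ℕ) (T : Finset ℕ) (d : ℕ → ℕ) (v : ℕ) (Q : Finset ℕ) : Prop :=
  Q ⊆ T ∧ ∃ (m : ℕ) (x : ℕ → ℕ),
    x 0 = v ∧
    (∀ j ≤ m, x j ∈ Finset.Icc 1 N) ∧
    (∀ j < m, x (j + 1) = x j + 1 ∨ x j = x (j + 1) + 1) ∧
    (∀ t ∈ Q, ∃ j, j ≤ m ∧ j ≤ d t ∧ x j = t) ∧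
    (∀ j ≤ m, x j ∈ T → x j ∈ Q)

lemma line_ivt (m : ℕ) (x : ℕ → ℕ)
    (hstep : ∀ j < m, x (j + 1) = x j + 1 ∨ x j = x (j + 1) + 1) :
    ∀ j ≤ m, ∀ c, (x 0 ≤ c ∧ c ≤ x j) ∨ (x j ≤ c ∧ c ≤ x 0) → ∃ i ≤ j, x i = c := by
  intro j
  induction j with
  | zero => intro _ c hc; exact ⟨0, le_refl 0, by omega⟩
  | succ j ih =>
    intro hj c hc
    by_cases h : x (j + 1) = c
    · exact ⟨j + 1, le_refl _, h⟩
    · have hs := hstep j (by omega)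
      obtain ⟨i, hi, hxi⟩ := ih (by omega) c (by omega)
      exact ⟨i, by omega, hxi⟩

lemma linePCS_eq_filter (N : ℕ) (T : Finset ℕ) (d : ℕ → ℕ) (v : ℕ)
    (Q : Finset ℕ) (hQ : Q.Nonempty) (h : LinePCS N T d v Q) :
    Q = T.filter (fun t =>
        (insert v Q).min' (Finset.insert_nonempty v Q) ≤ t ∧
          t ≤ (insert v Q).max' (Finset.insert_nonempty v Q)) := by
  obtain ⟨hQT, m, x, hx0, _, hstep, hvisit, hproper⟩ := h
  set m0 := (insert v Q).min' (Finset.insert_nonempty v Q) with hm0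
  set M0 := (insert v Q).max' (Finset.insert_nonempty v Q) with hM0
  -- the walk visits m0 and M0
  have hm0mem : m0 ∈ insert v Q := Finset.min'_mem _ _
  have hM0mem : M0 ∈ insert v Q := Finset.max'_mem _ _
  have hm0v : m0 ≤ v := Finset.min'_le _ _ (Finset.mem_insert_self v Q)
  have hvM0 : v ≤ M0 := Finset.le_max' _ _ (Finset.mem_insert_self v Q)
  have hvisit' : ∀ w ∈ insert v Q, ∃ j ≤ m, x j = w := by
    intro w hw
    rcases Finset.mem_insert.mp hw with hw | hw
    · exact ⟨0, Nat.zero_le m, by rw [hx0, hw]⟩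
    · obtain ⟨j, hj, _, hxj⟩ := hvisit w hw
      exact ⟨j, hj, hxj⟩
  obtain ⟨j0, hj0, hxj0⟩ := hvisit' m0 hm0mem
  obtain ⟨j1, hj1, hxj1⟩ := hvisit' M0 hM0mem
  ext t
  simp only [Finset.mem_filter]
  constructor
  · intro ht
    exact ⟨hQT ht, Finset.min'_le _ _ (Finset.mem_insert_of_mem ht),
      Finset.le_max' _ _ (Finset.mem_insert_of_mem ht)⟩
  · rintro ⟨htT, h1, h2⟩
    -- the walk visits t
    have : ∃ i ≤ m, x i = t := by
      by_cases hc : t ≤ v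
      · obtain ⟨i, hi, hxi⟩ := line_ivt m x hstep j0 hj0 t (by omega)
        exact ⟨i, le_trans hi hj0, hxi⟩
      · obtain ⟨i, hi, hxi⟩ := line_ivt m x hstep j1 hj1 t (by omega)
        exact ⟨i, le_trans hi hj1, hxi⟩
    obtain ⟨i, hi, hxi⟩ := this
    have := hproper i hi (by rw [hxi]; exact htT)
    rwa [hxi] at this

/-- On a linear graph, every nonempty proper covering set from `v` consists exactly of
the targets lying between its extremes (together with `v`); consequently there are at
most `(|T| + 1)²` proper covering sets from `v`. -/
theorem stmt10 (N : ℕ) (T : Finset ℕ) (hT : T ⊆ Finset.Icc 1 N)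
    (d : ℕ → ℕ) (v : ℕ) (hv : v ∈ Finset.Icc 1 N) :
    (∀ Q : Finset ℕ, Q.Nonempty → LinePCS N T d v Q →
      Q = T.filter (fun t =>
        (insert v Q).min' (Finset.insert_nonempty v Q) ≤ t ∧
          t ≤ (insert v Q).max' (Finset.insert_nonempty v Q))) ∧
    {Q : Finset ℕ | LinePCS N T d v Q}.encard ≤ (((T.card + 1) ^ 2 : ℕ) : ℕ∞) := by
  refine ⟨fun Q hQ h => linePCS_eq_filter N T d v Q hQ h, ?_⟩
  set f : Finset ℕ → ℕ × ℕ := fun Q =>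
    ((insert v Q).min' (Finset.insert_nonempty v Q),
     (insert v Q).max' (Finset.insert_nonempty v Q)) with hf
  -- if ∅ is a PCS then v ∉ T
  have hempty : LinePCS N T d v ∅ → v ∉ T := by
    rintro ⟨_, m, x, hx0, _, _, _, hproper⟩ hvT
    have := hproper 0 (Nat.zero_le m) (by rw [hx0]; exact hvT)
    simp at this
  -- mixed case helper
  have hmix : ∀ Q : Finset ℕ, Q.Nonempty → LinePCS N T d v Q →
      LinePCS N T d v ∅ → f Q ≠ f ∅ := by
    intro Q hQne hQ he hfe
    have hfQ : f ∅ = (v, v) := by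
      simp [hf]
    rw [hfQ] at hfe
    obtain ⟨t, ht⟩ := hQne
    have h1 : (insert v Q).min' (Finset.insert_nonempty v Q) ≤ t :=
      Finset.min'_le _ _ (Finset.mem_insert_of_mem ht)
    have h2 : t ≤ (insert v Q).max' (Finset.insert_nonempty v Q) :=
      Finset.le_max' _ _ (Finset.mem_insert_of_mem ht)
    have htv : t = v := by
      have e1 := congrArg Prod.fst hfe
      have e2 := congrArg Prod.snd hfe
      simp [hf] at e1 e2
      omega
    exact hempty he (hQ.1 (htv ▸ ht))
  have hinj : Set.InjOn f {Q : Finset ℕ | LinePCS N T d v Q} := by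
    intro Q1 h1 Q2 h2 hfe
    rcases Finset.eq_empty_or_nonempty Q1 with he1 | hne1
    · rcases Finset.eq_empty_or_nonempty Q2 with he2 | hne2
      · rw [he1, he2]
      · exact absurd (he1 ▸ hfe).symm (hmix Q2 hne2 h2 (he1 ▸ h1))
    · rcases Finset.eq_empty_or_nonempty Q2 with he2 | hne2
      · exact absurd (he2 ▸ hfe) (hmix Q1 hne1 h1 (he2 ▸ h2))
      · rw [linePCS_eq_filter N T d v Q1 hne1 h1, linePCS_eq_filter N T d v Q2 hne2 h2]
        have e1 := congrArg Prod.fst hfe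
        have e2 := congrArg Prod.snd hfe
        simp only [hf] at e1 e2
        rw [e1, e2]
  have himg : f '' {Q : Finset ℕ | LinePCS N T d v Q} ⊆
      ↑((insert v T) ×ˢ (insert v T)) := by
    rintro p ⟨Q, hQ, rfl⟩
    have hsub : insert v Q ⊆ insert v T := Finset.insert_subset_insert v hQ.1
    have hm : (insert v Q).min' (Finset.insert_nonempty v Q) ∈ insert v T :=
      hsub (Finset.min'_mem _ _)
    have hM : (insert v Q).max' (Finset.insert_nonempty v Q) ∈ insert v T :=
      hsub (Finset.max'_mem _ _)
    exact Finset.mem_coe.mpr (Finset.mem_product.mpr ⟨hm, hM⟩)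
  calc {Q : Finset ℕ | LinePCS N T d v Q}.encard
      = (f '' {Q : Finset ℕ | LinePCS N T d v Q}).encard := (hinj.encard_image).symm
    _ ≤ (↑((insert v T) ×ˢ (insert v T)) : Set (ℕ × ℕ)).encard := Set.encard_mono himg
    _ = (((insert v T) ×ˢ (insert v T)).card : ℕ∞) := Set.encard_coe_eq_coe_finsetCard _
    _ ≤ (((T.card + 1) ^ 2 : ℕ) : ℕ∞) := by
        rw [Nat.cast_le, Finset.card_product]
        have := Finset.card_insert_le v T
        nlinarith
end

section
/- Consider a cycle graph on N vertices with unit edge lengths, a set of targets T among its vertices with deadlines d : T → ℕ, and a starting vertex v. The set of vertices visited by any walk starting at v is an arc (a set of consecutive vertices along the cycle) containing v; hence every proper covering set from v equals T ∩ A for some arc A containing v, and the number of proper covering sets from v is at most (|T| + 1)². (This characterization underlies the polynomial-time algorithm for SRG-v on cycle graphs.) -/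
/-- `A` is an arc of the cycle graph on `ZMod N`: a set of consecutive vertices. -/
def IsArc (N : ℕ) (A : Finset (ZMod N)) : Prop :=
  ∃ (s : ZMod N) (l : ℕ),
    A = (Finset.range (l + 1)).image (fun k : ℕ => (s + (k : ZMod N)))

/-- `Q` is a proper covering set from `v` on the cycle graph on `ZMod N` (unit edge
lengths), with targets `T` and deadlines `d`: there is a walk starting at `v` that
visits every target of `Q` within its deadline and passes through no target of
`T \ Q`. -/
def CyclePCS (N : ℕ) (T : Finset (ZMod N)) (d : ZMod N → ℕ) (v : ZMod N)
    (Q : Finset (ZMod N)) : Prop :=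
  Q ⊆ T ∧ ∃ (m : ℕ) (x : ℕ → ZMod N),
    x 0 = v ∧
    (∀ j < m, x (j + 1) = x j + 1 ∨ x (j + 1) = x j - 1) ∧
    (∀ t ∈ Q, ∃ j, j ≤ m ∧ j ≤ d t ∧ x j = t) ∧
    (∀ j ≤ m, x j ∈ T → x j ∈ Q)

/-!
A walk on the cycle moves by `±1`, so each new vertex extends the visited arc at one of its two
ends; the visited set is therefore an arc through `v`. A proper covering set `Q` is exactly the set
of targets met by its walk, i.e. `T ∩ A` for that arc `A`. Splitting `A` at `v` into a backward
and a forward ray, `T ∩ A` is the union of two members of monotone chains of subsets of `T`; each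
chain takes at most `|T| + 1` values, which gives the bound `(|T| + 1)²`.
-/

open Finset

lemma image_range_add_two_sub_one {N : ℕ} (s : ZMod N) (l : ℕ) :
    (range (l + 2)).image (fun k : ℕ => s - 1 + k) =
      insert (s - 1) ((range (l + 1)).image (fun k : ℕ => s + k)) := by
  rw [range_add_one', image_insert, map_eq_image, image_image]
  congr 1
  · simp
  · refine image_congr fun k _ => ?_
    show s - 1 + ((k + 1 : ℕ) : ZMod N) = s + k
    push_cast
    ring

lemma IsArc.insert_of_adj {N : ℕ} {A : Finset (ZMod N)} (hA : IsArc N A) {y z : ZMod N}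
    (hy : y ∈ A) (hz : z = y + 1 ∨ z = y - 1) : IsArc N (insert z A) := by
  by_cases hzA : z ∈ A
  · rwa [insert_eq_of_mem hzA]
  obtain ⟨s, l, rfl⟩ := hA
  obtain ⟨k, hk, rfl⟩ := mem_image.1 hy
  rw [mem_range] at hk
  rcases hz with rfl | rfl
  · obtain rfl : k = l := by
      by_contra hne
      exact hzA (mem_image.2 ⟨k + 1, mem_range.2 (by omega), by push_cast; ring⟩)
    refine ⟨s, k + 1, ?_⟩
    conv_rhs => rw [range_add_one, image_insert]
    congr 1
    push_cast
    ring
  · obtain rfl : k = 0 := by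
      by_contra hne
      refine hzA (mem_image.2 ⟨k - 1, mem_range.2 (by omega), ?_⟩)
      rw [Nat.cast_sub (by omega : 1 ≤ k)]
      ring
    refine ⟨s - 1, l + 1, ?_⟩
    rw [image_range_add_two_sub_one]
    simp

lemma isArc_image_range_of_walk {N : ℕ} (m : ℕ) (x : ℕ → ZMod N)
    (hstep : ∀ j < m, x (j + 1) = x j + 1 ∨ x (j + 1) = x j - 1) :
    IsArc N ((range (m + 1)).image x) := by
  induction m with
  | zero => exact ⟨x 0, 0, by simp⟩
  | succ m ih =>
    rw [range_add_one, image_insert]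
    exact (ih fun j hj => hstep j (by omega)).insert_of_adj
      (mem_image_of_mem x (self_mem_range_succ m)) (hstep m (by omega))

lemma IsArc.eq_image_sub_union_image_add {N : ℕ} {A : Finset (ZMod N)} (hA : IsArc N A)
    {v : ZMod N} (hv : v ∈ A) :
    ∃ a b : ℕ, A = (range (a + 1)).image (fun i : ℕ => v - i) ∪
      (range (b + 1)).image (fun i : ℕ => v + i) := by
  obtain ⟨s, l, rfl⟩ := hA
  obtain ⟨j, hj, rfl⟩ := mem_image.1 hv
  rw [mem_range] at hj
  refine ⟨j, l - j, ?_⟩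
  ext w
  simp only [mem_union, mem_image, mem_range]
  constructor
  · rintro ⟨k, hk, rfl⟩
    rcases le_total k j with hkj | hjk
    · exact Or.inl ⟨j - k, by omega, by rw [Nat.cast_sub hkj]; ring⟩
    · exact Or.inr ⟨k - j, by omega, by rw [Nat.cast_sub hjk]; ring⟩
  · rintro (⟨i, hi, rfl⟩ | ⟨i, hi, rfl⟩)
    · exact ⟨j - i, by omega, by rw [Nat.cast_sub (by omega : i ≤ j)]; ring⟩
    · exact ⟨j + i, by omega, by push_cast; ring⟩

/-- Distinct members of a chain have distinct cardinalities. -/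
lemma Monotone.encard_range_le_card_add_one {ι α : Type*} [LinearOrder ι] {T : Finset α}
    {u : ι → Finset α} (hu : Monotone u) (hT : ∀ i, u i ⊆ T) :
    (Set.range u).encard ≤ T.card + 1 := by
  have hinj : Set.InjOn card (Set.range u) := by
    rintro _ ⟨i, rfl⟩ _ ⟨j, rfl⟩ hij
    rcases le_total i j with h | h
    · exact eq_of_subset_of_card_le (hu h) hij.ge
    · exact (eq_of_subset_of_card_le (hu h) hij.le).symm
  calc (Set.range u).encard = (card '' Set.range u).encard := hinj.encard_image.symm
    _ ≤ {n | n < T.card + 1}.encard := by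
        refine Set.encard_le_encard ?_
        rintro _ ⟨_, ⟨i, rfl⟩, rfl⟩
        exact Nat.lt_succ_of_le (card_le_card (hT i))
    _ = T.card + 1 := (Set.Nat.encard_range _).trans (Nat.cast_succ _)

lemma CyclePCS.exists_isArc {N : ℕ} {T : Finset (ZMod N)} {d : ZMod N → ℕ} {v : ZMod N}
    {Q : Finset (ZMod N)} (hQ : CyclePCS N T d v Q) :
    ∃ A : Finset (ZMod N), IsArc N A ∧ v ∈ A ∧ Q = T ∩ A := by
  obtain ⟨hQT, m, x, rfl, hstep, hvisit, hpass⟩ := hQ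
  refine ⟨(range (m + 1)).image x, isArc_image_range_of_walk m x hstep,
    mem_image_of_mem x (mem_range.2 m.succ_pos), ?_⟩
  ext t
  simp only [mem_inter, mem_image, mem_range]
  constructor
  · intro ht
    obtain ⟨j, hjm, -, rfl⟩ := hvisit t ht
    exact ⟨hQT ht, j, by omega, rfl⟩
  · rintro ⟨htT, j, hj, rfl⟩
    exact hpass j (by omega) htT

lemma encard_setOf_cyclePCS_le {N : ℕ} (T : Finset (ZMod N)) (d : ZMod N → ℕ) (v : ZMod N) :
    {Q : Finset (ZMod N) | CyclePCS N T d v Q}.encard ≤ (((T.card + 1) ^ 2 : ℕ) : ℕ∞) := by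
  set back : ℕ → Finset (ZMod N) := fun a => T ∩ (range (a + 1)).image (fun i : ℕ => v - i)
  set fwd : ℕ → Finset (ZMod N) := fun b => T ∩ (range (b + 1)).image (fun i : ℕ => v + i)
  have hback : Monotone back := fun a a' h =>
    inter_subset_inter_left (image_subset_image (range_subset_range.2 (by omega)))
  have hfwd : Monotone fwd := fun b b' h =>
    inter_subset_inter_left (image_subset_image (range_subset_range.2 (by omega)))
  have hsub :
      {Q | CyclePCS N T d v Q} ⊆ Set.image2 (· ∪ ·) (Set.range back) (Set.range fwd) := by
    intro Q hQ
    obtain ⟨A, hA, hvA, rfl⟩ := CyclePCS.exists_isArc hQ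
    obtain ⟨a, b, rfl⟩ := hA.eq_image_sub_union_image_add hvA
    exact ⟨back a, ⟨a, rfl⟩, fwd b, ⟨b, rfl⟩, (inter_union_distrib_left _ _ _).symm⟩
  calc {Q | CyclePCS N T d v Q}.encard
      ≤ (Set.range back ×ˢ Set.range fwd).encard := by
        rw [← Set.image_uncurry_prod] at hsub
        exact (Set.encard_le_encard hsub).trans (Set.encard_image_le _ _)
    _ = (Set.range back).encard * (Set.range fwd).encard := Set.encard_prod
    _ ≤ (T.card + 1) * (T.card + 1) :=
        mul_le_mul' (hback.encard_range_le_card_add_one fun _ => inter_subset_left)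
          (hfwd.encard_range_le_card_add_one fun _ => inter_subset_left)
    _ = (((T.card + 1) ^ 2 : ℕ) : ℕ∞) := by push_cast; ring

theorem stmt11_general (N : ℕ) (T : Finset (ZMod N)) (d : ZMod N → ℕ)
    (v : ZMod N) :
    (∀ (m : ℕ) (x : ℕ → ZMod N), x 0 = v →
        (∀ j < m, x (j + 1) = x j + 1 ∨ x (j + 1) = x j - 1) →
        IsArc N ((Finset.range (m + 1)).image x) ∧
          v ∈ (Finset.range (m + 1)).image x) ∧
    (∀ Q : Finset (ZMod N), CyclePCS N T d v Q →
        ∃ A : Finset (ZMod N), IsArc N A ∧ v ∈ A ∧ Q = T ∩ A) ∧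
    {Q : Finset (ZMod N) | CyclePCS N T d v Q}.encard ≤ (((T.card + 1) ^ 2 : ℕ) : ℕ∞) :=
  ⟨fun m x hx0 hstep => ⟨isArc_image_range_of_walk m x hstep,
      hx0 ▸ mem_image_of_mem x (mem_range.2 m.succ_pos)⟩,
    fun _ hQ => hQ.exists_isArc, encard_setOf_cyclePCS_le T d v⟩

/-- On a cycle graph: the set of vertices visited by any walk starting at `v` is an arc
containing `v`; hence every proper covering set from `v` equals `T ∩ A` for some arc `A`
containing `v`, and there are at most `(|T| + 1)²` proper covering sets from `v`. -/
theorem stmt11 (N : ℕ) (hN : 3 ≤ N) (T : Finset (ZMod N)) (d : ZMod N → ℕ)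
    (v : ZMod N) :
    (∀ (m : ℕ) (x : ℕ → ZMod N), x 0 = v →
        (∀ j < m, x (j + 1) = x j + 1 ∨ x (j + 1) = x j - 1) →
        IsArc N ((Finset.range (m + 1)).image x) ∧
          v ∈ (Finset.range (m + 1)).image x) ∧
    (∀ Q : Finset (ZMod N), CyclePCS N T d v Q →
        ∃ A : Finset (ZMod N), IsArc N A ∧ v ∈ A ∧ Q = T ∩ A) ∧
    {Q : Finset (ZMod N) | CyclePCS N T d v Q}.encard ≤ (((T.card + 1) ^ 2 : ℕ) : ℕ∞) :=
  stmt11_general N T d v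
end

section
/- Let G be a finite tree with unit edge lengths having exactly ℓ leaves, let T be a set of targets among its vertices with deadlines d : T → ℕ, and let v be a starting vertex. Then the number of proper covering sets from v is at most |V|^ℓ, where V is the vertex set of G. (Hence, for trees with a fixed number of leaves, the number of proper covering sets is polynomially bounded, which yields a polynomial-time algorithm for SRG-v on such trees.) -/
/-!
The vertices visited by a walk from `v` form a subtree `S` containing `v`, and the proper
covering set it witnesses is `T ∩ S`. In a tree every vertex other than `v` lies on the path
from `v` to some leaf, so `S` is the union of the paths from `v` to `c u`, where `c u` is the
last vertex of `S` on the path from `v` to the leaf `u`. Hence every proper covering set is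
determined by a map `c` from the `ℓ` leaves to `V`.
-/

/-- `Q` is a proper covering set from `v` on the graph `G` with unit edge lengths,
targets `T` and deadlines `d`: there is a walk starting at `v` that visits every target
of `Q` within its deadline and passes through no target of `T \ Q`. -/
def TreePCS {V : Type*} (G : SimpleGraph V) (T : Finset V) (d : V → ℕ) (v : V)
    (Q : Finset V) : Prop :=
  Q ⊆ T ∧ ∃ (m : ℕ) (x : ℕ → V),
    x 0 = v ∧
    (∀ j < m, G.Adj (x j) (x (j + 1))) ∧
    (∀ t ∈ Q, ∃ j, j ≤ m ∧ j ≤ d t ∧ x j = t) ∧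
    (∀ j ≤ m, x j ∈ T → x j ∈ Q)

namespace SimpleGraph

variable {V : Type*} {G : SimpleGraph V}

theorem IsAcyclic.support_subset_of_isPath (hG : G.IsAcyclic) {a b : V} {p : G.Walk a b}
    (hp : p.IsPath) (q : G.Walk a b) : p.support ⊆ q.support := by
  classical
  have : p = q.bypass := congrArg Subtype.val <|
    (hG.subsingleton_path a b).elim ⟨p, hp⟩ ⟨q.bypass, q.bypass_isPath⟩
  exact this ▸ q.support_bypass_subset_support

theorem IsAcyclic.exists_isPath_degree_eq_one_support_subset [Fintype V] [DecidableRel G.Adj]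
    (hG : G.IsAcyclic) {a b : V} (p : G.Walk a b) (hp : p.IsPath) (hb : G.degree b ≠ 0) :
    ∃ (u : V) (q : G.Walk a u), q.IsPath ∧ G.degree u = 1 ∧ p.support ⊆ q.support := by
  by_cases hb1 : G.degree b = 1
  · exact ⟨b, p, hp, hb1, List.Subset.refl _⟩
  -- all neighbours of `b` on `p` equal `p.penultimate`, and `b` has at least two neighbours
  obtain ⟨z, hbz, hz⟩ : ∃ z, G.Adj b z ∧ z ∉ p.support := by
    have : 1 < (G.neighborFinset b).card := by rw [card_neighborFinset_eq_degree]; omega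
    obtain ⟨z, hz, hne⟩ := Finset.exists_mem_ne this p.penultimate
    rw [mem_neighborFinset] at hz
    exact ⟨z, hz, fun hmem => hne (hG.eq_penultimate_of_adj_end hp hz hmem)⟩
  have hpz : (p.concat hbz).IsPath := hp.concat hz hbz
  have hlen : p.length + 1 < Fintype.card V := by simpa using hpz.length_lt
  obtain ⟨u, q, hq, hu, hsub⟩ := hG.exists_isPath_degree_eq_one_support_subset (p.concat hbz)
    hpz (G.degree_pos_iff_exists_adj z |>.2 ⟨b, hbz.symm⟩).ne'
  exact ⟨u, q, hq, hu, List.Subset.trans (p.support_subset_support_concat hbz) hsub⟩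
termination_by Fintype.card V - p.length

theorem exists_walk_support_subset_image {x : ℕ → V} {m : ℕ}
    (hx : ∀ j < m, G.Adj (x j) (x (j + 1))) :
    ∀ j ≤ m, ∃ p : G.Walk (x 0) (x j), ∀ y ∈ p.support, y ∈ x '' Set.Iic m := by
  intro j
  induction j with
  | zero => exact fun _ => ⟨.nil, by simpa using ⟨0, Nat.zero_le m, rfl⟩⟩
  | succ j ih =>
    intro hj
    obtain ⟨p, hp⟩ := ih (by omega)
    refine ⟨p.concat (hx j (by omega)), fun y hy => ?_⟩
    rw [Walk.support_concat, List.mem_append, List.mem_singleton] at hy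
    rcases hy with hy | rfl
    · exact hp y hy
    · exact ⟨j + 1, hj, rfl⟩

namespace IsTree

variable (hG : G.IsTree)

noncomputable def path (a b : V) : G.Walk a b :=
  (hG.existsUnique_path a b).exists.choose

theorem isPath_path (a b : V) : (hG.path a b).IsPath :=
  (hG.existsUnique_path a b).exists.choose_spec

theorem eq_path {a b : V} {p : G.Walk a b} (hp : p.IsPath) : p = hG.path a b :=
  (hG.existsUnique_path a b).unique hp (hG.isPath_path a b)

def IsRootedSubtree (v : V) (S : Set V) : Prop :=
  v ∈ S ∧ ∀ w ∈ S, ∀ x ∈ (hG.path v w).support, x ∈ S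

open Classical in
/-- The last vertex of `S` on the path from `v` to `u` (junk value `v` if there is none). -/
noncomputable def lastOnPath (v : V) (S : Set V) (u : V) : V :=
  (hG.path v u).getVert
    (Nat.findGreatest (fun i => (hG.path v u).getVert i ∈ S) (hG.path v u).length)

def unionPathsFrom {ι : Type*} (v : V) (c : ι → V) : Set V :=
  insert v {w | ∃ i, w ∈ (hG.path v (c i)).support}

variable {hG}

theorem lastOnPath_mem {v : V} {S : Set V} (hv : v ∈ S) (u : V) : hG.lastOnPath v S u ∈ S := by
  classical
  exact Nat.findGreatest_spec (P := fun i => (hG.path v u).getVert i ∈ S) (Nat.zero_le _)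
    (by simpa using hv)

theorem mem_support_path_lastOnPath {v u w : V} {S : Set V} (hwS : w ∈ S)
    (hwu : w ∈ (hG.path v u).support) : w ∈ (hG.path v (hG.lastOnPath v S u)).support := by
  classical
  obtain ⟨i, rfl, hi⟩ := Walk.mem_support_iff_exists_getVert.1 hwu
  set p := hG.path v u
  set k := Nat.findGreatest (fun i => p.getVert i ∈ S) p.length
  have hik : i ≤ k := Nat.le_findGreatest hi hwS
  show p.getVert i ∈ (hG.path v (p.getVert k)).support
  rw [← hG.eq_path ((hG.isPath_path v u).take k)]
  simpa [min_eq_right hik] using (p.take k).getVert_mem_support i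

theorem eq_unionPathsFrom_lastOnPath [Fintype V] [DecidableRel G.Adj] {v : V} {S : Set V}
    (hS : hG.IsRootedSubtree v S) :
    S = hG.unionPathsFrom v fun u : {u // G.degree u = 1} => hG.lastOnPath v S u := by
  obtain ⟨hvS, hS⟩ := hS
  ext w
  constructor
  · intro hwS
    by_cases hwv : w = v
    · exact .inl hwv
    have hw : G.degree w ≠ 0 := ((hG.connected.preconnected w v).degree_pos_left hwv).ne'
    obtain ⟨u, q, hq, hu, hsub⟩ :=
      hG.isAcyclic.exists_isPath_degree_eq_one_support_subset _ (hG.isPath_path v w) hw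
    rw [hG.eq_path hq] at hsub
    exact .inr ⟨⟨u, hu⟩, mem_support_path_lastOnPath hwS (hsub (Walk.end_mem_support _))⟩
  · rintro (rfl | ⟨u, hw⟩)
    · exact hvS
    · exact hS _ (lastOnPath_mem hvS u) w hw

end IsTree

end SimpleGraph

open SimpleGraph in
theorem TreePCS.exists_isRootedSubtree {V : Type*} {G : SimpleGraph V} (hG : G.IsTree)
    {T : Finset V} {d : V → ℕ} {v : V} {Q : Finset V} (hQ : TreePCS G T d v Q) :
    ∃ S : Set V, hG.IsRootedSubtree v S ∧ ∀ t, t ∈ Q ↔ t ∈ T ∧ t ∈ S := by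
  obtain ⟨hQT, m, x, rfl, hx, hcov, havoid⟩ := hQ
  refine ⟨x '' Set.Iic m, ⟨⟨0, Nat.zero_le m, rfl⟩, ?_⟩, fun t => ⟨fun ht => ⟨hQT ht, ?_⟩, ?_⟩⟩
  · rintro _ ⟨j, hj, rfl⟩ y hy
    obtain ⟨p, hp⟩ := exists_walk_support_subset_image hx j hj
    exact hp y (hG.isAcyclic.support_subset_of_isPath (hG.isPath_path _ _) p hy)
  · obtain ⟨j, hj, -, rfl⟩ := hcov t ht
    exact ⟨j, hj, rfl⟩
  · rintro ⟨hT, j, hj, rfl⟩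
    exact havoid j hj hT

theorem stmt12_general {V : Type*} [Fintype V] (G : SimpleGraph V)
    [DecidableRel G.Adj] (hG : G.IsTree)
    (ℓ : ℕ) (hℓ : ℓ = (Finset.univ.filter (fun u => G.degree u = 1)).card)
    (T : Finset V) (d : V → ℕ) (v : V) :
    {Q : Finset V | TreePCS G T d v Q}.encard ≤ ((Fintype.card V ^ ℓ : ℕ) : ℕ∞) := by
  classical
  have hcoded : {Q | TreePCS G T d v Q} ⊆
      Set.range fun c : {u // G.degree u = 1} → V => T.filter (· ∈ hG.unionPathsFrom v c) := by
    intro Q hQ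
    obtain ⟨S, hS, hQS⟩ := hQ.exists_isRootedSubtree hG
    refine ⟨fun u => hG.lastOnPath v S u, ?_⟩
    ext t
    simp only [← hG.eq_unionPathsFrom_lastOnPath hS, Finset.mem_filter, hQS]
  calc {Q | TreePCS G T d v Q}.encard
      ≤ (Set.range fun c : {u // G.degree u = 1} → V =>
          T.filter (· ∈ hG.unionPathsFrom v c)).encard := Set.encard_mono hcoded
    _ ≤ ENat.card ({u // G.degree u = 1} → V) := by
      rw [← Set.image_univ, ← Set.encard_univ]
      exact Set.encard_image_le _ _
    _ = ((Fintype.card V ^ ℓ : ℕ) : ℕ∞) := by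
      simp [ENat.card_eq_coe_fintype_card, Fintype.card_subtype, hℓ]

/-- On a finite tree with exactly `ℓ` leaves, the number of proper covering sets from any
starting vertex `v` is at most `|V| ^ ℓ`. -/
theorem stmt12 {V : Type*} [Fintype V] [DecidableEq V] (G : SimpleGraph V)
    [DecidableRel G.Adj] (hG : G.IsTree)
    (ℓ : ℕ) (hℓ : ℓ = (Finset.univ.filter (fun u => G.degree u = 1)).card)
    (T : Finset V) (d : V → ℕ) (v : V) :
    {Q : Finset V | TreePCS G T d v Q}.encard ≤ ((Fintype.card V ^ ℓ : ℕ) : ℕ∞) :=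
  stmt12_general G hG ℓ hℓ T d v
end
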